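/- A bicomplex matrix A = A₁ + jA₂ ∈ 𝔹ℂ^{n×n} is hyperbolic positive if and only if A₁ is a positive semidefinite complex matrix, A₂ is skew self-adjoint (A₂ + conj(A₂)ᵗ = 0), and −A₁ ⪯ iA₂ ⪯ A₁ in the Loewner order, i.e. both A₁ − iA₂ and A₁ + iA₂ are positive semidefinite complex matrices. -/

import Mathlib

open Complex Matrix Kronecker BigOperators

open scoped ComplexOrder

/-- Bicomplex numbers, modeled as pairs `(z₁, z₂) ∈ ℂ × ℂ` representing `z₁ + j z₂`.
Addition is the componentwise (Prod) addition. -/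
abbrev BC : Type := ℂ × ℂ

noncomputable section

/-- Bicomplex multiplication: `(z₁,z₂)·(w₁,w₂) = (z₁w₁ − z₂w₂, z₁w₂ + z₂w₁)`. -/
def bcMul (z w : BC) : BC := (z.1 * w.1 - z.2 * w.2, z.1 * w.2 + z.2 * w.1)

/-- The `*`-conjugate `Z* = conj z₁ − j conj z₂`. -/
def bcStar (z : BC) : BC := ((starRingEnd ℂ) z.1, -((starRingEnd ℂ) z.2))

/-- First idempotent component `λ₁ = z₁ − i z₂`. -/
def idem1 (z : BC) : ℂ := z.1 - Complex.I * z.2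

/-- Second idempotent component `λ₂ = z₁ + i z₂`. -/
def idem2 (z : BC) : ℂ := z.1 + Complex.I * z.2

/-- Membership in `𝔻⁺`: both idempotent components are nonnegative real numbers. -/
def inDplus (z : BC) : Prop :=
  (idem1 z).im = 0 ∧ 0 ≤ (idem1 z).re ∧ (idem2 z).im = 0 ∧ 0 ≤ (idem2 z).re

/-- A bicomplex matrix `A = A₁ + j A₂` is a pair of complex matrices. -/
abbrev BCMat (I J : Type) : Type := Matrix I J ℂ × Matrix I J ℂ

/-- Bicomplex matrix multiplication, induced by bicomplex multiplication. -/
def bmul {I J K : Type} [Fintype J] (A : BCMat I J) (B : BCMat J K) : BCMat I K :=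
  (A.1 * B.1 - A.2 * B.2, A.1 * B.2 + A.2 * B.1)

/-- `(A*)ᵗ`: the entrywise `*`-conjugate followed by transpose. -/
def bcStarT {I J : Type} (A : BCMat I J) : BCMat J I := (A.1ᴴ, -(A.2ᴴ))

/-- The `(j,k)` entry of a bicomplex matrix, as a bicomplex number. -/
def bcEntry {I J : Type} (A : BCMat I J) (j : I) (k : J) : BC := (A.1 j k, A.2 j k)

/-- First idempotent component `𝒜₁ = A₁ − i A₂` of a bicomplex matrix. -/
def midem1 {I J : Type} (A : BCMat I J) : Matrix I J ℂ := A.1 - Complex.I • A.2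

/-- Second idempotent component `𝒜₂ = A₁ + i A₂` of a bicomplex matrix. -/
def midem2 {I J : Type} (A : BCMat I J) : Matrix I J ℂ := A.1 + Complex.I • A.2

/-- The bicomplex number `(c*)ᵗ · A · c`. -/
def quadForm {I : Type} [Fintype I] (A : BCMat I I) (c : I → BC) : BC :=
  ∑ j, ∑ k, bcMul (bcStar (c j)) (bcMul (bcEntry A j k) (c k))

/-- `A` is hyperbolic positive if `(c*)ᵗ · A · c ∈ 𝔻⁺` for every bicomplex vector `c`. -/
def HypPos {I : Type} [Fintype I] (A : BCMat I I) : Prop :=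
  ∀ c : I → BC, inDplus (quadForm A c)

/-- Bicomplex trace `Tr(A) = Tr(A₁) + j Tr(A₂)`. -/
def bcTrace {I : Type} [Fintype I] (A : BCMat I I) : BC := (A.1.trace, A.2.trace)

/-- The bicomplex tensor product
`A ⊗ⱼ B = (A₁⊗B₁ − A₂⊗B₂) + j (A₁⊗B₂ + A₂⊗B₁)`. -/
def bkron {I J K L : Type} (A : BCMat I J) (B : BCMat K L) : BCMat (I × K) (J × L) :=
  (A.1 ⊗ₖ B.1 - A.2 ⊗ₖ B.2, A.1 ⊗ₖ B.2 + A.2 ⊗ₖ B.1)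

end

noncomputable section

/-!
The idempotent components `λ₁ = z₁ − i z₂` and `λ₂ = z₁ + i z₂` are `*`-ring homomorphisms
`𝔹ℂ → ℂ`, so `λₖ((c*)ᵗ A c) = (λₖ c)ᴴ 𝒜ₖ (λₖ c)` with `𝒜₁ = A₁ − iA₂`, `𝒜₂ = A₁ + iA₂`.
Already complex test vectors `c` have `λ₁ c = λ₂ c = c`, so `A` is hyperbolic positive iff
`𝒜₁` and `𝒜₂` are positive semidefinite. Then `A₁ = (𝒜₁ + 𝒜₂)/2` is positive semidefinite,
and `𝒜₂ − 𝒜₁ = 2iA₂` is Hermitian, i.e. `A₂` is skew-Hermitian.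
-/

open Matrix

section Idempotent

lemma idem1_bcMul (z w : BC) : idem1 (bcMul z w) = idem1 z * idem1 w := by
  simp only [idem1, bcMul]
  linear_combination (-(z.2 * w.2)) * I_sq

lemma idem2_bcMul (z w : BC) : idem2 (bcMul z w) = idem2 z * idem2 w := by
  simp only [idem2, bcMul]
  linear_combination (-(z.2 * w.2)) * I_sq

lemma idem1_bcStar (z : BC) : idem1 (bcStar z) = starRingEnd ℂ (idem1 z) := by
  simp [idem1, bcStar]

lemma idem2_bcStar (z : BC) : idem2 (bcStar z) = starRingEnd ℂ (idem2 z) := by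
  simp [idem2, bcStar]

lemma idem1_sum {ι : Type*} (s : Finset ι) (f : ι → BC) :
    idem1 (∑ i ∈ s, f i) = ∑ i ∈ s, idem1 (f i) := by
  simp [idem1, Prod.fst_sum, Prod.snd_sum, Finset.mul_sum]

lemma idem2_sum {ι : Type*} (s : Finset ι) (f : ι → BC) :
    idem2 (∑ i ∈ s, f i) = ∑ i ∈ s, idem2 (f i) := by
  simp [idem2, Prod.fst_sum, Prod.snd_sum, Finset.mul_sum, Finset.sum_add_distrib]

lemma idem1_bcEntry {ι κ : Type} (A : BCMat ι κ) (j : ι) (k : κ) :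
    idem1 (bcEntry A j k) = midem1 A j k := by
  simp [idem1, bcEntry, midem1]

lemma idem2_bcEntry {ι κ : Type} (A : BCMat ι κ) (j : ι) (k : κ) :
    idem2 (bcEntry A j k) = midem2 A j k := by
  simp [idem2, bcEntry, midem2]

lemma idem1_mk_zero (x : ℂ) : idem1 (x, 0) = x := by
  simp [idem1]

lemma idem2_mk_zero (x : ℂ) : idem2 (x, 0) = x := by
  simp [idem2]

lemma inDplus_iff (z : BC) : inDplus z ↔ 0 ≤ idem1 z ∧ 0 ≤ idem2 z := by
  simp only [inDplus, Complex.le_def, zero_re, zero_im]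
  tauto

end Idempotent

section ComplexMatrix

variable {ι : Type*}

theorem Matrix.posSemidef_of_forall_dotProduct_mulVec_nonneg [Fintype ι] {M : Matrix ι ι ℂ}
    (hM : ∀ x, 0 ≤ star x ⬝ᵥ (M *ᵥ x)) : M.PosSemidef := by
  classical
  have hinner (x : EuclideanSpace ℂ ι) :
      inner ℂ (M.toEuclideanLin x) x = star x.ofLp ⬝ᵥ (M *ᵥ x.ofLp) := by
    rw [EuclideanSpace.inner_eq_star_dotProduct, ← (IsSelfAdjoint.of_nonneg (hM x.ofLp)).star_eq,
      dotProduct_star, dotProduct_comm]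
    rfl
  rw [← isPositive_toEuclideanLin_iff, LinearMap.isPositive_iff,
    LinearMap.isSymmetric_iff_inner_map_self_real]
  simp only [hinner]
  exact ⟨fun x => (IsSelfAdjoint.of_nonneg (hM x.ofLp)).star_eq, fun x => hM x.ofLp⟩

theorem Matrix.posSemidef_of_posSemidef_sub_add {P Q : Matrix ι ι ℂ}
    (h₁ : (P - I • Q).PosSemidef) (h₂ : (P + I • Q).PosSemidef) : P.PosSemidef := by
  have hP : P = (2⁻¹ : ℝ) • ((P - I • Q) + (P + I • Q)) := by
    rw [sub_add_add_cancel, ← two_smul ℝ, smul_smul]; norm_num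
  rw [hP]
  exact (h₁.add h₂).smul (by norm_num)

theorem Matrix.add_conjTranspose_eq_zero_of_isHermitian_sub_add {P Q : Matrix ι ι ℂ}
    (h₁ : (P - I • Q).IsHermitian) (h₂ : (P + I • Q).IsHermitian) : Q + Qᴴ = 0 := by
  have hdiff := congrArg₂ (· - ·) h₂.eq h₁.eq
  simp only [conjTranspose_add, conjTranspose_sub, conjTranspose_smul, star_def, conj_I] at hdiff
  have h : (2 * I) • (Q + Qᴴ) = 0 := by linear_combination (norm := module) -hdiff
  exact (smul_eq_zero.mp h).resolve_left (by simp)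

end ComplexMatrix

section HyperbolicPositive

variable {ι : Type} [Fintype ι]

lemma idem1_quadForm (A : BCMat ι ι) (c : ι → BC) :
    idem1 (quadForm A c) = star (idem1 ∘ c) ⬝ᵥ (midem1 A *ᵥ (idem1 ∘ c)) := by
  simp only [quadForm, idem1_sum, idem1_bcMul, idem1_bcStar, idem1_bcEntry, dotProduct, mulVec,
    Finset.mul_sum]
  rfl

lemma idem2_quadForm (A : BCMat ι ι) (c : ι → BC) :
    idem2 (quadForm A c) = star (idem2 ∘ c) ⬝ᵥ (midem2 A *ᵥ (idem2 ∘ c)) := by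
  simp only [quadForm, idem2_sum, idem2_bcMul, idem2_bcStar, idem2_bcEntry, dotProduct, mulVec,
    Finset.mul_sum]
  rfl

lemma hypPos_iff_posSemidef_midem (A : BCMat ι ι) :
    HypPos A ↔ (midem1 A).PosSemidef ∧ (midem2 A).PosSemidef := by
  simp only [HypPos, inDplus_iff, idem1_quadForm, idem2_quadForm]
  refine ⟨fun h => ⟨?_, ?_⟩, fun ⟨h₁, h₂⟩ c => ⟨h₁.dotProduct_mulVec_nonneg _,
    h₂.dotProduct_mulVec_nonneg _⟩⟩
  · refine posSemidef_of_forall_dotProduct_mulVec_nonneg fun x => ?_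
    simpa [Function.comp_def, idem1_mk_zero] using (h fun j => (x j, 0)).1
  · refine posSemidef_of_forall_dotProduct_mulVec_nonneg fun x => ?_
    simpa [Function.comp_def, idem2_mk_zero] using (h fun j => (x j, 0)).2

end HyperbolicPositive

/-- `A = A₁ + jA₂` is hyperbolic positive iff `A₁` is positive
semidefinite, `A₂` is skew self-adjoint, and `−A₁ ⪯ iA₂ ⪯ A₁`, i.e. both
`A₁ − iA₂` and `A₁ + iA₂` are positive semidefinite. -/
theorem hypPos_iff_parts {n : ℕ} (A : BCMat (Fin n) (Fin n)) :
    HypPos A ↔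
      (A.1).PosSemidef ∧ A.2 + (A.2)ᴴ = 0 ∧
        (A.1 - Complex.I • A.2).PosSemidef ∧ (A.1 + Complex.I • A.2).PosSemidef := by
  rw [hypPos_iff_posSemidef_midem]
  exact ⟨fun ⟨h₁, h₂⟩ => ⟨posSemidef_of_posSemidef_sub_add h₁ h₂,
    add_conjTranspose_eq_zero_of_isHermitian_sub_add h₁.isHermitian h₂.isHermitian, h₁, h₂⟩,
    fun h => h.2.2⟩

end
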